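/- arXiv:2506.15893 — 4 statements merged into one kernel-verified Lean document; each statement's English description precedes it below -/
import Mathlib

section
/- Let 𝒞 be a concept class over a finite domain X and let d : X × X → ℝ≥0 be arbitrary. Then S^d_min(𝒞) ≥ ⌈SD(𝒞)/2⌉, where SD(𝒞) is the self-directed learning complexity of 𝒞. -/
open scoped NNReal

/-- The interaction game for learning from a contrast oracle:
`Identifiable pt CS n V` holds iff the learner can guarantee, within at most `n` rounds,
that the version space (starting from `V`) becomes a singleton `{C*}` (i.e. a subsingleton,
since the target always stays in the version space), against every target `C* ∈ V` and
every adversarial choice of contrastive examples from the contrast set `CS`.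
A query has type `Q`; `pt q` is the instance whose label is returned; `CS q C V` is the
contrast set of the query `q` w.r.t. concept `C` and current version space `V`. -/
def Identifiable {X Q : Type*} (pt : Q → X)
    (CS : Q → (X → Bool) → Set (X → Bool) → Set X) :
    ℕ → Set (X → Bool) → Prop
  | 0, V => V.Subsingleton
  | n + 1, V =>
      V.Subsingleton ∨
        ∃ q : Q, ∀ Cstar ∈ V,
          ((CS q Cstar V = ∅ →
            Identifiable pt CS n
              {C ∈ V | C (pt q) = Cstar (pt q) ∧ CS q C V = ∅}) ∧
          (∀ x' ∈ CS q Cstar V,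
            Identifiable pt CS n
              {C ∈ V | C (pt q) = Cstar (pt q) ∧ x' ∈ CS q C V ∧ C x' = Cstar x'}))

/-- The contrast sample complexity of class `𝓒` (as an extended natural number):
the least `n` such that some learner identifies every target within `n` rounds. -/
noncomputable def sampleComplexity {X Q : Type*} (pt : Q → X)
    (CS : Q → (X → Bool) → Set (X → Bool) → Set X) (𝓒 : Set (X → Bool)) : ℕ∞ :=
  sInf {n : ℕ∞ | ∃ k : ℕ, n = (k : ℕ∞) ∧ Identifiable pt CS k 𝓒}

/-- Minimum-distance contrast set: points of opposite label at minimal `d`-distance. -/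
def CSmin {X : Type*} (d : X → X → ℝ≥0) (x : X) (C : X → Bool) : Set X :=
  {x' | C x' ≠ C x ∧ ∀ x'' : X, C x'' ≠ C x → d x x' ≤ d x x''}

/-- Sample complexity in the minimum-distance model. -/
noncomputable def Smin {X : Type*} (d : X → X → ℝ≥0) (𝓒 : Set (X → Bool)) : ℕ∞ :=
  sampleComplexity (id : X → X) (fun x C _ => CSmin d x C) 𝓒

/-- Proximity contrast set: points of opposite label within distance `r` of `x`. -/
def CSprox {X : Type*} (d : X → X → ℝ≥0) (x : X) (r : ℝ≥0) (C : X → Bool) : Set X :=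
  {x' | C x' ≠ C x ∧ d x x' ≤ r}

/-- Sample complexity in the proximity model (queries are pairs `(x, r)`). -/
noncomputable def Sprox {X : Type*} (d : X → X → ℝ≥0) (𝓒 : Set (X → Bool)) : ℕ∞ :=
  sampleComplexity (Prod.fst : X × ℝ≥0 → X) (fun q C _ => CSprox d q.1 q.2 C) 𝓒

/-- Membership-query complexity: the contrast sets are always empty,
so the oracle only ever returns the label of the queried point. -/
noncomputable def SMQ {X : Type*} (𝓒 : Set (X → Bool)) : ℕ∞ :=
  sampleComplexity (id : X → X) (fun _ _ _ => (∅ : Set X)) 𝓒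

/-- The self-directed learning game with fuel: `SDGame n V R k` holds iff, with `n`
rounds remaining, a self-directed learner facing version space `V` and unqueried
instances `R` can label all of `R` while incurring at most `k` mistakes against every
target in `V`.  In each round the learner picks a fresh instance `x ∈ R` and predicts
a label `b`; if the target's label disagrees with `b` the mistake budget decreases. -/
def SDGame {X : Type*} [DecidableEq X] : ℕ → Set (X → Bool) → Finset X → ℕ → Prop
  | 0, _, R, _ => R = ∅
  | n + 1, V, R, k =>
      ∃ x ∈ R, ∃ b : Bool,
        (({C ∈ V | C x = b}).Nonempty →
          SDGame n {C ∈ V | C x = b} (R.erase x) k) ∧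
        (({C ∈ V | C x = !b}).Nonempty →
          1 ≤ k ∧ SDGame n {C ∈ V | C x = !b} (R.erase x) (k - 1))

/-- The self-directed learning complexity `SD(𝓒)`: the least mistake budget with which
some self-directed learner can process the whole (finite) domain. -/
noncomputable def SDC {X : Type*} [Fintype X] [DecidableEq X]
    (𝓒 : Set (X → Bool)) : ℕ∞ :=
  sInf {n : ℕ∞ | ∃ k : ℕ, n = (k : ℕ∞) ∧ SDGame (Fintype.card X) 𝓒 Finset.univ k}

section Aux

variable {X : Type*}

lemma sdgame_mono [DecidableEq X] :
    ∀ (n : ℕ) (V : Set (X → Bool)) (R : Finset X) (k k' : ℕ), k ≤ k' →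
      SDGame n V R k → SDGame n V R k'
  | 0, _, _, _, _, _, h => h
  | n+1, V, R, k, k', hkk', h => by
      obtain ⟨x, hx, b, h1, h2⟩ := h
      exact ⟨x, hx, b,
        fun hne => sdgame_mono n _ _ k k' hkk' (h1 hne),
        fun hne => ⟨le_trans (h2 hne).1 hkk',
          sdgame_mono n _ _ (k-1) (k'-1) (Nat.sub_le_sub_right hkk' 1) (h2 hne).2⟩⟩

lemma sdgame_subsingleton [DecidableEq X] :
    ∀ (n : ℕ) (V : Set (X → Bool)) (R : Finset X) (k : ℕ), V.Subsingleton →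
      R.card = n → SDGame n V R k
  | 0, _, _, _, _, hR => Finset.card_eq_zero.mp hR
  | n+1, V, R, k, hV, hR => by
      obtain ⟨x, hx⟩ := Finset.card_pos.mp (by rw [hR]; exact Nat.succ_pos n)
      rcases V.eq_empty_or_nonempty with rfl | ⟨C₀, hC₀⟩
      · refine ⟨x, hx, true, fun hne => ?_, fun hne => ?_⟩
        · obtain ⟨C, hC, -⟩ := hne; exact hC.elim
        · obtain ⟨C, hC, -⟩ := hne; exact hC.elim
      · have hcard : (R.erase x).card = n := by
          rw [Finset.card_erase_of_mem hx, hR]; rfl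
        refine ⟨x, hx, C₀ x, fun _ => ?_, fun hne => ?_⟩
        · exact sdgame_subsingleton n _ _ k (hV.anti (Set.sep_subset _ _)) hcard
        · obtain ⟨C, hC, hCx⟩ := hne
          rw [hV hC hC₀] at hCx
          simp at hCx

lemma ident_mono {Q : Type*} (pt : Q → X) (cs : Q → (X → Bool) → Set X) :
    ∀ (k : ℕ) (V W : Set (X → Bool)), W ⊆ V →
      Identifiable pt (fun q C _ => cs q C) k V →
      Identifiable pt (fun q C _ => cs q C) k W
  | 0, _, _, hWV, h => h.anti hWV
  | k+1, V, W, hWV, h => by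
      rcases h with h | ⟨q, hq⟩
      · exact Or.inl (h.anti hWV)
      · refine Or.inr ⟨q, fun Cs hCs => ⟨fun hcs => ?_, fun x' hx' => ?_⟩⟩
        · refine ident_mono pt cs k _ _ ?_ ((hq Cs (hWV hCs)).1 hcs)
          exact fun C hC => ⟨hWV hC.1, hC.2⟩
        · refine ident_mono pt cs k _ _ ?_ ((hq Cs (hWV hCs)).2 x' hx')
          exact fun C hC => ⟨hWV hC.1, hC.2⟩

open scoped Classical in
lemma inner_sim {X : Type*} [Fintype X] [DecidableEq X] (d : X → X → ℝ≥0) (k m : ℕ) :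
    ∀ (n : ℕ) (R : Finset X) (V : Set (X → Bool)) (x : X), R.card = n → x ∉ R →
      (∀ C ∈ V, ∀ C' ∈ V, ∀ y, y ∉ R → C y = C' y) →
      (∀ Cs ∈ V, ∀ x' ∈ CSmin d x Cs,
        Identifiable (id : X → X) (fun x C _ => CSmin d x C) k
          {C ∈ V | C x = Cs x ∧ x' ∈ CSmin d x C ∧ C x' = Cs x'}) →
      (∀ (W : Set (X → Bool)) (R' : Finset X), R' ⊆ R →
        (∀ C ∈ W, ∀ C' ∈ W, ∀ y, y ∉ R' → C y = C' y) →
        Identifiable (id : X → X) (fun x C _ => CSmin d x C) k W →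
        SDGame R'.card W R' m) →
      SDGame n V R (m + 1)
  | 0, R, V, x, hcard, _, _, _, _ => Finset.card_eq_zero.mp hcard
  | n+1, R, V, x, hcard, hxR, hInv, H, Hcont => by
      rcases V.eq_empty_or_nonempty with rfl | ⟨C₀, hC₀⟩
      · exact sdgame_subsingleton (n+1) _ R _ Set.subsingleton_empty hcard
      have hCx : ∀ C ∈ V, C x = C₀ x := fun C hC => hInv C hC C₀ hC₀ x hxR
      set β := C₀ x with hβ
      set F := R.filter (fun z => ∀ y, y ∉ R → C₀ y ≠ β → d x z < d x y) with hF
      rcases F.eq_empty_or_nonempty with hFe | hFne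
      · -- no fresh candidate: a known point is a minimum-distance contrast point
        have hRne : R.Nonempty := Finset.card_pos.mp (hcard ▸ Nat.succ_pos n)
        obtain ⟨z₀, hz₀⟩ := hRne
        have hO : ∃ y, y ∉ R ∧ C₀ y ≠ β := by
          by_contra h
          push_neg at h
          have : z₀ ∈ F := Finset.mem_filter.mpr
            ⟨hz₀, fun y hy hne => absurd (h y hy) hne⟩
          rw [hFe] at this
          exact absurd this (Finset.notMem_empty z₀)
        set O := Finset.univ.filter (fun y : X => y ∉ R ∧ C₀ y ≠ β) with hOdef
        have hOne : O.Nonempty := by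
          obtain ⟨y, hy1, hy2⟩ := hO
          exact ⟨y, Finset.mem_filter.mpr ⟨Finset.mem_univ _, hy1, hy2⟩⟩
        obtain ⟨ys, hysO, hysmin⟩ := Finset.exists_min_image O (d x) hOne
        obtain ⟨-, hysR, hysβ⟩ := Finset.mem_filter.mp hysO
        -- not all of the above needed... key claim:
        have hkey : ∀ C ∈ V, ys ∈ CSmin d x C := by
          intro C hC
          refine ⟨?_, ?_⟩
          · rw [hInv C hC C₀ hC₀ ys hysR, hCx C hC]; exact hysβ
          · intro x'' hx''
            by_cases hR'' : x'' ∈ R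
            · have hF'' : x'' ∉ F := by rw [hFe]; exact Finset.notMem_empty _
              have : ¬ ∀ y, y ∉ R → C₀ y ≠ β → d x x'' < d x y :=
                fun h => hF'' (Finset.mem_filter.mpr ⟨hR'', h⟩)
              push_neg at this
              obtain ⟨y, hy1, hy2, hy3⟩ := this
              exact le_trans (hysmin y (Finset.mem_filter.mpr
                ⟨Finset.mem_univ _, hy1, hy2⟩)) hy3
            · have hx''β : C₀ x'' ≠ β := by
                rw [← hInv C hC C₀ hC₀ x'' hR'']
                rw [hCx C hC] at hx''
                exact hx''
              exact hysmin x'' (Finset.mem_filter.mpr ⟨Finset.mem_univ _, hR'', hx''β⟩)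
        have hsub : V ⊆ {C ∈ V | C x = C₀ x ∧ ys ∈ CSmin d x C ∧ C ys = C₀ ys} :=
          fun C hC => ⟨hC, hCx C hC, hkey C hC, hInv C hC C₀ hC₀ ys hysR⟩
        have hid : Identifiable (id : X → X) (fun x C _ => CSmin d x C) k V :=
          ident_mono _ _ k _ _ hsub (H C₀ hC₀ ys (hkey C₀ hC₀))
        have := Hcont V R le_rfl hInv hid
        rw [hcard] at this
        exact sdgame_mono _ _ _ m (m+1) (Nat.le_succ m) this
      · -- query the closest fresh candidate, predicting β
        obtain ⟨z, hzF, hzmin⟩ := Finset.exists_min_image F (d x) hFne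
        have hzR : z ∈ R := (Finset.mem_filter.mp hzF).1
        have hzprop : ∀ y, y ∉ R → C₀ y ≠ β → d x z < d x y :=
          (Finset.mem_filter.mp hzF).2
        have hcard' : (R.erase z).card = n := by
          rw [Finset.card_erase_of_mem hzR, hcard]; rfl
        have hxz : x ∉ R.erase z := fun h => hxR (Finset.mem_of_mem_erase h)
        have houtR : ∀ y, y ∉ R.erase z → y = z ∨ y ∉ R := by
          intro y hy
          by_cases hyz : y = z
          · exact Or.inl hyz
          · exact Or.inr fun hyR => hy (Finset.mem_erase.mpr ⟨hyz, hyR⟩)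
        refine ⟨z, hzR, β, fun _ => ?_, fun hne => ?_⟩
        · -- correct prediction: recurse
          refine inner_sim d k m n (R.erase z) {C ∈ V | C z = β} x hcard' hxz
            ?_ ?_ ?_
          · intro C hC C' hC' y hy
            rcases houtR y hy with rfl | hyR
            · rw [hC.2, hC'.2]
            · exact hInv C hC.1 C' hC'.1 y hyR
          · intro Cs hCs x' hx'
            refine ident_mono _ _ k _ _ ?_ (H Cs hCs.1 x' hx')
            exact fun C hC => ⟨hC.1.1, hC.2⟩
          · intro W R' hR' hInvW hidW
            exact Hcont W R' (hR'.trans (Finset.erase_subset z R)) hInvW hidW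
        · -- mistake: z is a minimum-distance contrast point
          obtain ⟨Cs, hCsV, hCsz⟩ := hne
          have hkey : ∀ C ∈ V, C z = !β → z ∈ CSmin d x C := by
            intro C hC hCz
            refine ⟨?_, ?_⟩
            · rw [hCz, hCx C hC]; simp [hβ]
            · intro x'' hx''
              by_cases hR'' : x'' ∈ R
              · by_cases hF'' : x'' ∈ F
                · exact hzmin x'' hF''
                · have : ¬ ∀ y, y ∉ R → C₀ y ≠ β → d x x'' < d x y :=
                    fun h => hF'' (Finset.mem_filter.mpr ⟨hR'', h⟩)
                  push_neg at this
                  obtain ⟨y, hy1, hy2, hy3⟩ := this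
                  exact le_trans (le_of_lt (hzprop y hy1 hy2)) hy3
              · have hx''β : C₀ x'' ≠ β := by
                  rw [← hInv C hC C₀ hC₀ x'' hR'']
                  rw [hCx C hC] at hx''
                  exact hx''
                exact le_of_lt (hzprop x'' hR'' hx''β)
          have hsub : {C ∈ V | C z = !β} ⊆
              {C ∈ V | C x = Cs x ∧ z ∈ CSmin d x C ∧ C z = Cs z} := by
            intro C hC
            exact ⟨hC.1, (hCx C hC.1).trans (hCx Cs hCsV).symm,
              hkey C hC.1 hC.2, hC.2.trans hCsz.symm⟩
          have hid : Identifiable (id : X → X) (fun x C _ => CSmin d x C) k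
              {C ∈ V | C z = !β} :=
            ident_mono _ _ k _ _ hsub (H Cs hCsV z (hkey Cs hCsV hCsz))
          have hInv3 : ∀ C ∈ {C ∈ V | C z = !β}, ∀ C' ∈ {C ∈ V | C z = !β},
              ∀ y, y ∉ R.erase z → C y = C' y := by
            intro C hC C' hC' y hy
            rcases houtR y hy with rfl | hyR
            · rw [hC.2, hC'.2]
            · exact hInv C hC.1 C' hC'.1 y hyR
          have := Hcont _ (R.erase z) (Finset.erase_subset z R) hInv3 hid
          rw [hcard'] at this
          exact ⟨Nat.succ_le_succ (Nat.zero_le m), by simpa using this⟩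

lemma outer_sim {X : Type*} [Fintype X] [DecidableEq X] (d : X → X → ℝ≥0) :
    ∀ (k : ℕ) (V : Set (X → Bool)) (R : Finset X),
      (∀ C ∈ V, ∀ C' ∈ V, ∀ y, y ∉ R → C y = C' y) →
      Identifiable (id : X → X) (fun x C _ => CSmin d x C) k V →
      SDGame R.card V R (2 * k)
  | 0, V, R, _, hid => sdgame_subsingleton _ _ _ _ hid rfl
  | k+1, V, R, hInv, hid => by
      rcases hid with hss | ⟨x, hx⟩
      · exact sdgame_subsingleton _ _ _ _ hss rfl
      have H : ∀ Cs ∈ V, ∀ x' ∈ CSmin d x Cs,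
          Identifiable (id : X → X) (fun x C _ => CSmin d x C) k
            {C ∈ V | C x = Cs x ∧ x' ∈ CSmin d x C ∧ C x' = Cs x'} :=
        fun Cs hCs x' hx' => (hx Cs hCs).2 x' hx'
      have Hcont : ∀ (m : ℕ), 2 * k ≤ m → ∀ (W : Set (X → Bool)) (R' : Finset X),
          (∀ C ∈ W, ∀ C' ∈ W, ∀ y, y ∉ R' → C y = C' y) →
          Identifiable (id : X → X) (fun x C _ => CSmin d x C) k W →
          SDGame R'.card W R' m :=
        fun m hm W R' hInvW hidW =>
          sdgame_mono _ _ _ _ _ hm (outer_sim d k W R' hInvW hidW)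
      by_cases hxR : x ∈ R
      · obtain ⟨n, hn⟩ : ∃ n, R.card = n + 1 :=
          ⟨R.card - 1, (Nat.succ_pred_eq_of_pos (Finset.card_pos.mpr ⟨x, hxR⟩)).symm⟩
        have hcard' : (R.erase x).card = n := by
          rw [Finset.card_erase_of_mem hxR, hn]; rfl
        have hxe : x ∉ R.erase x := Finset.notMem_erase x R
        have houtR : ∀ (b : Bool) (C : X → Bool), C ∈ {C ∈ V | C x = b} →
            ∀ C' ∈ {C ∈ V | C x = b}, ∀ y, y ∉ R.erase x → C y = C' y := by
          intro b C hC C' hC' y hy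
          by_cases hyx : y = x
          · subst hyx; rw [hC.2, hC'.2]
          · exact hInv C hC.1 C' hC'.1 y
              (fun hyR => hy (Finset.mem_erase.mpr ⟨hyx, hyR⟩))
        have hH : ∀ (b : Bool), ∀ Cs ∈ {C ∈ V | C x = b}, ∀ x' ∈ CSmin d x Cs,
            Identifiable (id : X → X) (fun x C _ => CSmin d x C) k
              {C ∈ {C ∈ V | C x = b} | C x = Cs x ∧ x' ∈ CSmin d x C ∧ C x' = Cs x'} :=
          by
            intro b Cs hCs x' hx'
            refine ident_mono _ _ k _ _ ?_ (H Cs hCs.1 x' hx')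
            exact fun C hC => ⟨hC.1.1, hC.2⟩
        rw [hn]
        refine ⟨x, hxR, true, fun _ => ?_, fun _ => ?_⟩
        · have h2 : 2 * (k+1) = (2*k+1) + 1 := by ring
          rw [h2]
          exact inner_sim d k (2*k+1) n (R.erase x) _ x hcard' hxe
            (houtR true) (hH true) (fun W R' _ h1 h2 => Hcont (2*k+1) (Nat.le_succ _) W R' h1 h2)
        · have h1 : 1 ≤ 2 * (k+1) := by omega
          have h2 : 2 * (k+1) - 1 = 2*k + 1 := by omega
          rw [h2]
          exact ⟨h1, inner_sim d k (2*k) n (R.erase x) _ x hcard' hxe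
            (houtR false) (hH false) (fun W R' _ h1 h2 => Hcont (2*k) le_rfl W R' h1 h2)⟩
      · have h2 : 2 * (k+1) = (2*k+1) + 1 := by ring
        rw [h2]
        exact inner_sim d k (2*k+1) R.card R V x rfl hxR hInv H
          (fun W R' _ hInvW hidW =>
            sdgame_mono _ _ _ _ _ (Nat.le_succ _) (outer_sim d k W R' hInvW hidW))

end Aux

/-- Over a finite domain and for an arbitrary
`d : X × X → ℝ≥0`, `S^d_min(𝓒) ≥ ⌈SD(𝓒)/2⌉`; since both quantities are (extended)
naturals this is equivalently expressed as `SD(𝓒) ≤ 2 · S^d_min(𝓒)`. -/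
theorem statement12 {X : Type*} [Fintype X] [DecidableEq X]
    (𝓒 : Set (X → Bool)) (d : X → X → ℝ≥0) :
    SDC 𝓒 ≤ 2 * Smin d 𝓒 := by
  rcases Set.eq_empty_or_nonempty
      {n : ℕ∞ | ∃ k : ℕ, n = (k : ℕ∞) ∧
        Identifiable (id : X → X) (fun x C _ => CSmin d x C) k 𝓒} with hS | hS
  · rw [Smin, sampleComplexity, hS, sInf_empty]
    rw [show (2 : ℕ∞) * ⊤ = ⊤ from by simp]
    exact le_top
  · obtain ⟨k, hk, hid⟩ := csInf_mem hS
    have hgame : SDGame (Fintype.card X) 𝓒 Finset.univ (2*k) := by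
      have := outer_sim d k 𝓒 Finset.univ
        (fun C _ C' _ y hy => absurd (Finset.mem_univ y) hy) hid
      rwa [Finset.card_univ] at this
    calc SDC 𝓒 ≤ ((2*k : ℕ) : ℕ∞) := sInf_le ⟨2*k, rfl, hgame⟩
    _ = 2 * ((k : ℕ) : ℕ∞) := by push_cast; ring
    _ = 2 * Smin d 𝓒 := by rw [Smin, sampleComplexity, ← hk]
end

section
/- Let 𝒞 be a finite concept class over a finite domain X with VC dimension VCD(𝒞) = 1. Then there exists a metric d on X (i.e., d : X × X → ℝ≥0 symmetric, satisfying the triangle inequality, with d(x, x') = 0 iff x = x') such that S^d_min(𝒞) ≤ 2. -/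
/-!
Fix a base concept `h` (a member of the class, if there is one) and let `flipSet x` be the set
of concepts that disagree with `h` at `x`. As no pair of points is shattered, two flip sets that
meet are nested. Hence a concept `C` is determined by any of its flip points `t` with the fewest
flips (a top flip): `C` flips exactly at the points `z` with `flipSet t ⊆ flipSet z`.

Let `x₀` be a point with the fewest flips. The metric is built so that, seen from `x₀`, the
points on the `h`-side of `x₀` come first, ordered by number of flips, while seen from any other
point the points on the other side come first, ordered likewise. The learner queries `x₀` and
then the returned contrast `x'`. If the target flips at `x₀`, then `x₀` is its top flip.
Otherwise `x'` is a flip with the fewest flips on the side of `x₀` (or lies on the other side if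
there is none), the second contrast `x''` is such a flip on the other side (or lies on the side
of `x₀` if there is none), and whichever of them has fewer flips is a top flip of the target.
-/

open scoped NNReal

/-- `𝓒` shatters a finite set `S`: every subset of `S` is cut out by some concept. -/
def Shatters {X : Type*} (𝓒 : Set (X → Bool)) (S : Finset X) : Prop :=
  ∀ T ⊆ S, ∃ C ∈ 𝓒, ∀ x ∈ S, (C x = true ↔ x ∈ T)


theorem Bool.eq_of_ne_of_ne {a b c : Bool} (ha : a ≠ c) (hb : b ≠ c) : a = b :=
  (Bool.eq_not_iff.2 ha).trans (Bool.eq_not_iff.2 hb).symm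

theorem Bool.eq_of_ne_iff_ne {a b c : Bool} (h : a ≠ c ↔ b ≠ c) : a = b := by
  cases a <;> cases b <;> cases c <;> simp_all

section

variable {X : Type*}

def IsMetric (d : X → X → ℝ≥0) : Prop :=
  (∀ x y, d x y = d y x) ∧ (∀ x y z, d x z ≤ d x y + d y z) ∧ (∀ x y, d x y = 0 ↔ x = y)

section OffsetDist

variable [DecidableEq X]

def offsetDist (L : ℕ) (w : X → X → ℕ) (x y : X) : ℝ≥0 :=
  if x = y then 0 else ((L + w x y : ℕ) : ℝ≥0)

theorem isMetric_offsetDist {L : ℕ} {w : X → X → ℕ} (hL : 0 < L)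
    (hsymm : ∀ x y, w x y = w y x) (hle : ∀ x y, w x y ≤ L) : IsMetric (offsetDist L w) := by
  refine ⟨fun x y => ?_, fun x y z => ?_, fun x y => ?_⟩
  · by_cases hxy : x = y
    · subst hxy; rfl
    · simp [offsetDist, hxy, Ne.symm hxy, hsymm x y]
  · by_cases hxz : x = z
    · simp [offsetDist, hxz]
    by_cases hxy : x = y
    · subst hxy; simp [offsetDist]
    by_cases hyz : y = z
    · subst hyz; simp [offsetDist]
    simp only [offsetDist, hxz, hxy, hyz, if_false]
    exact_mod_cast (by have := hle x z; omega : L + w x z ≤ L + w x y + (L + w y z))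
  · by_cases hxy : x = y
    · simp [offsetDist, hxy]
    · simp [offsetDist, hxy]; omega

end OffsetDist

def RanksFirst (d : X → X → ℝ≥0) (κ : X → ℕ) (S : Set X) (q : X) : Prop :=
  ∀ y y', y ≠ q → y' ≠ q → y ∈ S → (y' ∉ S ∨ κ y < κ y') → d q y < d q y'

theorem RanksFirst.mem_and_le_of_mem_CSmin {d : X → X → ℝ≥0} {κ : X → ℕ} {S : Set X}
    {q x' y : X} {C : X → Bool} (hd : RanksFirst d κ S q) (hx' : x' ∈ CSmin d q C)
    (hy : C y ≠ C q) (hyS : y ∈ S) : x' ∈ S ∧ κ x' ≤ κ y := by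
  by_contra hfar
  rw [not_and_or, not_le] at hfar
  have hyq : y ≠ q := fun h => hy (h ▸ rfl)
  have hx'q : x' ≠ q := fun h => hx'.1 (h ▸ rfl)
  exact (hd y x' hyq hx'q hyS hfar).not_ge (hx'.2 y hy)

section SideMetric

variable [DecidableEq X] (κ : X → ℕ) (S : Set X) [DecidablePred (· ∈ S)] (x₀ : X) (K : ℕ)

-- With `κ < K`: from `x₀` the weight is `3K + κ y` on `S` and `4K + κ y` off it; from `q ≠ x₀`
-- it is `c + κ y` off `S`, `c + K` on `S` (for some `c ≤ K`), and at least `3K` to `x₀`.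
def sideWeight (x y : X) : ℕ :=
  if x = x₀ then 3 * K + κ y + (if y ∈ S then 0 else K)
  else if y = x₀ then 3 * K + κ x + (if x ∈ S then 0 else K)
  else (if x ∈ S then K else κ x) + (if y ∈ S then K else κ y)

variable {κ S x₀ K}

theorem sideWeight_comm (x y : X) : sideWeight κ S x₀ K x y = sideWeight κ S x₀ K y x := by
  unfold sideWeight
  by_cases hx : x = x₀ <;> by_cases hy : y = x₀
  · subst hx hy; rfl
  all_goals simp only [hx, hy, if_true, if_false]; try omega

theorem sideWeight_le (hκ : ∀ y, κ y < K) (x y : X) : sideWeight κ S x₀ K x y ≤ 5 * K := by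
  have := hκ x; have := hκ y
  unfold sideWeight; split_ifs <;> omega

theorem ranksFirst_sideWeight (hκ : ∀ y, κ y < K) :
    RanksFirst (offsetDist (5 * K) (sideWeight κ S x₀ K)) κ S x₀ := by
  intro y y' hy hy' hyS hlt
  simp only [offsetDist, sideWeight, Ne.symm hy, Ne.symm hy', if_true, if_false, hyS, Nat.cast_lt]
  rcases hlt with hy'S | hlt
  · simp only [hy'S, if_false]; have := hκ y; omega
  · split_ifs <;> omega

theorem ranksFirst_compl_sideWeight (hκ : ∀ y, κ y < K) (hx₀ : x₀ ∈ S) {q : X} (hq : q ≠ x₀) :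
    RanksFirst (offsetDist (5 * K) (sideWeight κ S x₀ K)) κ Sᶜ q := by
  intro y y' hy hy' hyS hlt
  have hyx₀ : y ≠ x₀ := fun h => hyS (h ▸ hx₀)
  simp only [Set.mem_compl_iff, not_not] at hyS hlt
  simp only [offsetDist, sideWeight, Ne.symm hy, Ne.symm hy', hq, hyx₀, hyS, if_false,
    Nat.cast_lt]
  have := hκ y; have := hκ q
  by_cases hy'x₀ : y' = x₀
  · simp only [hy'x₀, if_true]; split_ifs <;> omega
  · simp only [hy'x₀, if_false]
    rcases hlt with hy'S | hlt
    · simp only [hy'S, if_true]; split_ifs <;> omega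
    · split_ifs <;> omega

theorem exists_isMetric_ranksFirst [Fintype X] (κ : X → ℕ) (S : Set X) {x₀ : X} (hx₀ : x₀ ∈ S) :
    ∃ d, IsMetric d ∧ RanksFirst d κ S x₀ ∧ ∀ q ≠ x₀, RanksFirst d κ Sᶜ q := by
  classical
  have hκ : ∀ y, κ y < Finset.univ.sup κ + 1 :=
    fun y => Nat.lt_succ_of_le (Finset.le_sup (Finset.mem_univ y))
  exact ⟨_, isMetric_offsetDist (by omega) sideWeight_comm (sideWeight_le hκ),
    ranksFirst_sideWeight hκ, fun q hq => ranksFirst_compl_sideWeight hκ hx₀ hq⟩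

end SideMetric

section Flips

variable (𝓒 : Set (X → Bool)) (h : X → Bool)

def flipSet (x : X) : Set (X → Bool) := {C ∈ 𝓒 | C x ≠ h x}

noncomputable def flipCount (x : X) : ℕ := (flipSet 𝓒 h x).ncard

def FlipsNested : Prop :=
  ∀ x y, ∀ C ∈ flipSet 𝓒 h x, C ∈ flipSet 𝓒 h y →
    flipSet 𝓒 h x ⊆ flipSet 𝓒 h y ∨ flipSet 𝓒 h y ⊆ flipSet 𝓒 h x

def IsTopFlip (C : X → Bool) (t : X) : Prop :=
  C t ≠ h t ∧ ∀ z, C z ≠ h z → flipCount 𝓒 h t ≤ flipCount 𝓒 h z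

variable {𝓒 h}

theorem shatters_pair [DecidableEq X] {x y : X} (hxy : x ≠ y)
    (hall : ∀ a b : Bool, ∃ C ∈ 𝓒, C x = a ∧ C y = b) : Shatters 𝓒 {x, y} := by
  intro T _
  obtain ⟨C, hC, hCx, hCy⟩ := hall (decide (x ∈ T)) (decide (y ∈ T))
  refine ⟨C, hC, fun z hz => ?_⟩
  rcases Finset.mem_insert.1 hz with rfl | hz
  · simp [hCx]
  · rw [Finset.mem_singleton.1 hz]; simp [hCy]

theorem flipsNested_of_mem (hvc : ∀ S : Finset X, Shatters 𝓒 S → S.card ≤ 1) (hh : h ∈ 𝓒) :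
    FlipsNested 𝓒 h := by
  classical
  intro x y C hCx hCy
  by_contra hne
  obtain ⟨hxy', hyx'⟩ := not_or.1 hne
  obtain ⟨Cx, ⟨hCx𝓒, hCxx⟩, hCxy⟩ := Set.not_subset.1 hxy'
  obtain ⟨Cy, ⟨hCy𝓒, hCyy⟩, hCyx⟩ := Set.not_subset.1 hyx'
  have hxy : x ≠ y := by rintro rfl; exact hxy' subset_rfl
  have agree : ∀ {D z}, D ∈ 𝓒 → D ∉ flipSet 𝓒 h z → D z = h z :=
    fun hD hz => not_not.1 fun hne => hz ⟨hD, hne⟩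
  -- `h`, `Cx`, `Cy` and `C` flip neither point, only `x`, only `y`, and both
  have hshat := hvc {x, y} <| shatters_pair hxy fun a b => by
    by_cases ha : a = h x <;> by_cases hb : b = h y
    · exact ⟨h, hh, ha.symm, hb.symm⟩
    · exact ⟨Cy, hCy𝓒, (agree hCy𝓒 hCyx).trans ha.symm, Bool.eq_of_ne_of_ne hCyy hb⟩
    · exact ⟨Cx, hCx𝓒, Bool.eq_of_ne_of_ne hCxx ha, (agree hCx𝓒 hCxy).trans hb.symm⟩
    · exact ⟨C, hCx.1, Bool.eq_of_ne_of_ne hCx.2 ha, Bool.eq_of_ne_of_ne hCy.2 hb⟩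
  rw [Finset.card_pair hxy] at hshat
  omega

theorem exists_flipsNested (hvc : ∀ S : Finset X, Shatters 𝓒 S → S.card ≤ 1) :
    ∃ h, FlipsNested 𝓒 h := by
  rcases 𝓒.eq_empty_or_nonempty with rfl | ⟨h, hh⟩
  · exact ⟨fun _ => false, fun _ _ _ hC => hC.1.elim⟩
  · exact ⟨h, flipsNested_of_mem hvc hh⟩

variable [Finite X] {C C' : X → Bool} {t : X}

theorem IsTopFlip.ne_iff (hN : FlipsNested 𝓒 h) (hC : C ∈ 𝓒) (ht : IsTopFlip 𝓒 h C t) (z : X) :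
    C z ≠ h z ↔ flipSet 𝓒 h t ⊆ flipSet 𝓒 h z := by
  refine ⟨fun hz => ?_, fun hsub => (hsub ⟨hC, ht.1⟩).2⟩
  rcases hN t z C ⟨hC, ht.1⟩ ⟨hC, hz⟩ with hsub | hsub
  · exact hsub
  · exact (Set.eq_of_subset_of_ncard_le hsub (ht.2 z hz) (Set.toFinite _)).ge

theorem IsTopFlip.eq (hN : FlipsNested 𝓒 h) (hC : C ∈ 𝓒) (hC' : C' ∈ 𝓒)
    (ht : IsTopFlip 𝓒 h C t) (ht' : IsTopFlip 𝓒 h C' t) : C = C' :=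
  funext fun z => Bool.eq_of_ne_iff_ne ((ht.ne_iff hN hC z).trans (ht'.ne_iff hN hC' z).symm)

end Flips

theorem identifiable_of_subsingleton {Q : Type*} {pt : Q → X}
    {CS : Q → (X → Bool) → Set (X → Bool) → Set X} {V : Set (X → Bool)} (hV : V.Subsingleton) :
    ∀ n, Identifiable pt CS n V
  | 0 => hV
  | _ + 1 => Or.inl hV

theorem Smin_le_of_identifiable {d : X → X → ℝ≥0} {𝓒 : Set (X → Bool)} {n : ℕ}
    (hn : Identifiable id (fun x C _ => CSmin d x C) n 𝓒) : Smin d 𝓒 ≤ n :=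
  sInf_le ⟨n, rfl, hn⟩

theorem eq_of_CSmin_eq_empty [Finite X] {d : X → X → ℝ≥0} {x : X} {C : X → Bool}
    (hC : CSmin d x C = ∅) (y : X) : C y = C x := by
  by_contra hy
  obtain ⟨m, hm, hmin⟩ := Set.exists_min_image {y | C y ≠ C x} (d x) (Set.toFinite _) ⟨y, hy⟩
  exact (hC ▸ ⟨hm, hmin⟩ : m ∈ (∅ : Set X))

section TwoRounds

variable {𝓒 : Set (X → Bool)} {h : X → Bool} {d : X → X → ℝ≥0} {x₀ x' x'' : X} {C : X → Bool}

theorem first_contrast_le (hd₀ : RanksFirst d (flipCount 𝓒 h) {y | h y = h x₀} x₀)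
    (hCx₀ : C x₀ = h x₀) (hx' : x' ∈ CSmin d x₀ C) {w : X} (hw : C w ≠ h w)
    (hwx₀ : h w = h x₀) : h x' = h x₀ ∧ flipCount 𝓒 h x' ≤ flipCount 𝓒 h w :=
  hd₀.mem_and_le_of_mem_CSmin hx' (hCx₀ ▸ hwx₀ ▸ hw) hwx₀

theorem second_contrast_le (hd₁ : ∀ q ≠ x₀, RanksFirst d (flipCount 𝓒 h) {y | h y = h x₀}ᶜ q)
    (hCx₀ : C x₀ = h x₀) (hx' : x' ∈ CSmin d x₀ C) (hx'' : x'' ∈ CSmin d x' C)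
    {w : X} (hw : C w ≠ h w) (hwx₀ : h w ≠ h x₀) :
    h x'' ≠ h x₀ ∧ flipCount 𝓒 h x'' ≤ flipCount 𝓒 h w := by
  have hx'x₀ : x' ≠ x₀ := fun h => hx'.1 (h ▸ rfl)
  have hCw : C w = h x₀ := Bool.eq_of_ne_of_ne hw (Ne.symm hwx₀)
  exact (hd₁ x' hx'x₀).mem_and_le_of_mem_CSmin hx'' (hCw ▸ hCx₀ ▸ Ne.symm hx'.1) hwx₀

theorem second_contrast_flips (hCx₀ : C x₀ = h x₀) (hx' : x' ∈ CSmin d x₀ C)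
    (hx'' : x'' ∈ CSmin d x' C) (hx''x₀ : h x'' ≠ h x₀) : C x'' ≠ h x'' := by
  have : C x'' = h x₀ := Bool.eq_of_ne_of_ne hx''.1 (Ne.symm (hCx₀ ▸ hx'.1))
  exact this ▸ Ne.symm hx''x₀

theorem isTopFlip_of_first_contrast_same_side
    (hd₀ : RanksFirst d (flipCount 𝓒 h) {y | h y = h x₀} x₀)
    (hd₁ : ∀ q ≠ x₀, RanksFirst d (flipCount 𝓒 h) {y | h y = h x₀}ᶜ q)
    (hCx₀ : C x₀ = h x₀) (hx' : x' ∈ CSmin d x₀ C) (hx'' : x'' ∈ CSmin d x' C)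
    (hside : h x' = h x₀) :
    IsTopFlip 𝓒 h C
      (if h x'' ≠ h x₀ ∧ flipCount 𝓒 h x'' ≤ flipCount 𝓒 h x' then x'' else x') := by
  have hdeep : ∀ w, C w ≠ h w → flipCount 𝓒 h x' ≤ flipCount 𝓒 h w ∨
      (h x'' ≠ h x₀ ∧ flipCount 𝓒 h x'' ≤ flipCount 𝓒 h w) := fun w hw => by
    by_cases hwx₀ : h w = h x₀
    · exact Or.inl (first_contrast_le hd₀ hCx₀ hx' hw hwx₀).2
    · exact Or.inr (second_contrast_le hd₁ hCx₀ hx' hx'' hw hwx₀)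
  split_ifs with hx''x'
  · refine ⟨second_contrast_flips hCx₀ hx' hx'' hx''x'.1, fun w hw => ?_⟩
    rcases hdeep w hw with hw' | hw' <;> omega
  · refine ⟨hside ▸ hCx₀ ▸ hx'.1, fun w hw => ?_⟩
    rcases hdeep w hw with hw' | hw'
    · exact hw'
    · exact (not_and_or.1 hx''x').elim (absurd hw'.1) (by omega)

theorem isTopFlip_or_eq_of_first_contrast_other_side
    (hd₀ : RanksFirst d (flipCount 𝓒 h) {y | h y = h x₀} x₀)
    (hd₁ : ∀ q ≠ x₀, RanksFirst d (flipCount 𝓒 h) {y | h y = h x₀}ᶜ q)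
    (hCx₀ : C x₀ = h x₀) (hx' : x' ∈ CSmin d x₀ C) (hx'' : x'' ∈ CSmin d x' C)
    (hside : h x' ≠ h x₀) :
    (h x'' ≠ h x₀ → IsTopFlip 𝓒 h C x'') ∧ (h x'' = h x₀ → C = h) := by
  have hflips : ∀ w, C w ≠ h w → h w ≠ h x₀ :=
    fun w hw hwx₀ => hside (first_contrast_le hd₀ hCx₀ hx' hw hwx₀).1
  refine ⟨fun hx''x₀ => ⟨second_contrast_flips hCx₀ hx' hx'' hx''x₀, fun w hw => ?_⟩,
    fun hx''x₀ => funext fun w => ?_⟩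
  · exact (second_contrast_le hd₁ hCx₀ hx' hx'' hw (hflips w hw)).2
  · by_contra hw
    exact (second_contrast_le hd₁ hCx₀ hx' hx'' hw (hflips w hw)).1 hx''x₀

theorem identifiable_two_of_ranksFirst [Finite X] (hN : FlipsNested 𝓒 h)
    (hx₀ : ∀ z, flipCount 𝓒 h x₀ ≤ flipCount 𝓒 h z)
    (hd₀ : RanksFirst d (flipCount 𝓒 h) {y | h y = h x₀} x₀)
    (hd₁ : ∀ q ≠ x₀, RanksFirst d (flipCount 𝓒 h) {y | h y = h x₀}ᶜ q) :
    Identifiable id (fun x C _ => CSmin d x C) 2 𝓒 := by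
  refine Or.inr ⟨x₀, fun C₀ _ => ⟨fun _ => identifiable_of_subsingleton ?_ 1, fun x' _ => ?_⟩⟩
  · -- without a contrast, the concept is constant
    rintro C ⟨-, hCx₀, hC⟩ C' ⟨-, hC'x₀, hC'⟩
    funext y
    rw [eq_of_CSmin_eq_empty hC y, eq_of_CSmin_eq_empty hC' y]
    exact hCx₀.trans hC'x₀.symm
  by_cases hC₀x₀ : C₀ x₀ = h x₀
  swap
  · -- the target flips at `x₀`, so `x₀` is its top flip
    refine identifiable_of_subsingleton ?_ 1
    rintro C ⟨hC, hCx₀, -⟩ C' ⟨hC', hC'x₀, -⟩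
    exact IsTopFlip.eq hN hC hC' ⟨hCx₀ ▸ hC₀x₀, fun z _ => hx₀ z⟩
      ⟨hC'x₀ ▸ hC₀x₀, fun z _ => hx₀ z⟩
  refine Or.inr ⟨x', fun C₁ hC₁ => ⟨fun hempty => ?_, fun x'' _ => ?_⟩⟩
  · -- `x₀` contrasts with `x'`, so the second answer cannot be `ω`
    exact absurd (eq_of_CSmin_eq_empty hempty x₀).symm hC₁.2.2.1.1
  rintro C ⟨⟨hC, hCx₀, hx', -⟩, -, hx'', -⟩ C' ⟨⟨hC', hC'x₀, hx'₁, -⟩, -, hx''₁, -⟩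
  replace hCx₀ : C x₀ = h x₀ := hCx₀.trans hC₀x₀
  replace hC'x₀ : C' x₀ = h x₀ := hC'x₀.trans hC₀x₀
  by_cases hside : h x' = h x₀
  · exact IsTopFlip.eq hN hC hC'
      (isTopFlip_of_first_contrast_same_side hd₀ hd₁ hCx₀ hx' hx'' hside)
      (isTopFlip_of_first_contrast_same_side hd₀ hd₁ hC'x₀ hx'₁ hx''₁ hside)
  have hC₂ := isTopFlip_or_eq_of_first_contrast_other_side hd₀ hd₁ hCx₀ hx' hx'' hside
  have hC'₂ := isTopFlip_or_eq_of_first_contrast_other_side hd₀ hd₁ hC'x₀ hx'₁ hx''₁ hside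
  by_cases hx''x₀ : h x'' = h x₀
  · exact (hC₂.2 hx''x₀).trans (hC'₂.2 hx''x₀).symm
  · exact IsTopFlip.eq hN hC hC' (hC₂.1 hx''x₀) (hC'₂.1 hx''x₀)

end TwoRounds

end

theorem statement13_general {X : Type*} [Fintype X] (𝓒 : Set (X → Bool))
    (hub : ∀ S : Finset X, Shatters 𝓒 S → S.card ≤ 1) :
    ∃ d : X → X → ℝ≥0,
      (∀ x y, d x y = d y x) ∧
      (∀ x y z, d x z ≤ d x y + d y z) ∧
      (∀ x y, d x y = 0 ↔ x = y) ∧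
      Smin d 𝓒 ≤ 2 := by
  classical
  obtain ⟨h, hN⟩ := exists_flipsNested hub
  cases isEmpty_or_nonempty X
  · exact ⟨fun _ _ => 0, isEmptyElim, isEmptyElim, isEmptyElim,
      Smin_le_of_identifiable (identifiable_of_subsingleton Set.subsingleton_of_subsingleton 2)⟩
  obtain ⟨x₀, hx₀⟩ := Finite.exists_min (flipCount 𝓒 h)
  obtain ⟨d, ⟨hsymm, htri, hzero⟩, hd₀, hd₁⟩ :=
    exists_isMetric_ranksFirst (flipCount 𝓒 h) {y | h y = h x₀} (x₀ := x₀) rfl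
  exact ⟨d, hsymm, htri, hzero,
    Smin_le_of_identifiable (identifiable_two_of_ranksFirst hN hx₀ hd₀ hd₁)⟩

/-- If `𝓒` is a concept class over a finite domain with VC dimension
exactly 1 (some singleton is shattered, and every shattered set has size at most 1),
then there exists a metric `d` on `X` with `S^d_min(𝓒) ≤ 2`. -/
theorem statement13 {X : Type*} [Fintype X] (𝓒 : Set (X → Bool))
    (hub : ∀ S : Finset X, Shatters 𝓒 S → S.card ≤ 1)
    (hlb : ∃ S : Finset X, S.card = 1 ∧ Shatters 𝓒 S) :
    ∃ d : X → X → ℝ≥0,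
      (∀ x y, d x y = d y x) ∧
      (∀ x y z, d x z ≤ d x y + d y z) ∧
      (∀ x y, d x y = 0 ↔ x = y) ∧
      Smin d 𝓒 ≤ 2 :=
  statement13_general 𝓒 hub
end

section
/- Let m ≥ 2, let 𝒞 be a concept class over {0,1}^m, and let 𝒞' ⊆ 𝒞. Fix y_{m−1}, y_m ∈ {0,1} and set y'_{m−1} = 1 − y_{m−1}, y'_m = 1 − y_m. Assume: (P1) for every a ∈ {0,1}^m with a_m = y_m and every C ∈ 𝒞', C(a) = 1; and (P2) for every a ∈ {0,1}^m with a_m = y'_m and a_{m−1} = y_{m−1} and every C ∈ 𝒞', C(a) = 0. Let 𝒞'' be the concept class over {0,1}^{m−2} consisting of all functions (a_1,…,a_{m−2}) ↦ C(a_1,…,a_{m−2}, y'_{m−1}, y'_m) for C ∈ 𝒞'. Then S^d_min(𝒞) ≥ S^d_min(𝒞') ≥ S[MQ](𝒞''), where d is the Hamming distance on {0,1}^m. -/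
open scoped NNReal

/-!
Every `C ∈ 𝓒'` is constant off the free face `a_{m-1} = ¬y_{m-1}, a_m = ¬y_m`, so a
membership query at the point `z` of that face sharing the first `m - 2` coordinates of a
contrast query `x` lets the learner play the adversarial oracle itself: it can always answer
with a contrast point whose label and minimality are decided by `C z` alone — a neighbour of
`x` across a constant face, `z` itself, or, when `C z = 1` and `x` lies on the all-ones face
just above `z`, the point at distance two reached by also flipping `a_{m-1}`. The second
inequality holds because shrinking the class can only help a learner.
-/

open Function

local notation "dH" => fun a b => ((hammingDist a b : ℕ) : ℝ≥0)

theorem sampleComplexity_le_of_identifiable {X Q Y R : Type*} {pt : Q → X} {pt' : R → Y}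
    {CS : Q → (X → Bool) → Set (X → Bool) → Set X}
    {CS' : R → (Y → Bool) → Set (Y → Bool) → Set Y} {V : Set (X → Bool)} {W : Set (Y → Bool)}
    (h : ∀ n, Identifiable pt CS n V → Identifiable pt' CS' n W) :
    sampleComplexity pt' CS' W ≤ sampleComplexity pt CS V := by
  refine sInf_le_sInf ?_
  rintro _ ⟨n, rfl, hn⟩
  exact ⟨n, rfl, h n hn⟩

section Game

variable {X Q : Type*} {pt : Q → X} {CS : Q → (X → Bool) → Set X}

theorem Identifiable.anti {n : ℕ} {V W : Set (X → Bool)} (hWV : W ⊆ V)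
    (h : Identifiable pt (fun q C _ => CS q C) n V) :
    Identifiable pt (fun q C _ => CS q C) n W := by
  induction n generalizing V W with
  | zero => exact Set.Subsingleton.anti h hWV
  | succ n ih =>
    rcases h with h | ⟨q, hq⟩
    · exact Or.inl (h.anti hWV)
    have hsep : ∀ p : (X → Bool) → Prop, {C ∈ W | p C} ⊆ {C ∈ V | p C} :=
      fun _ _ hC => ⟨hWV hC.1, hC.2⟩
    exact Or.inr ⟨q, fun Cs hCs => ⟨fun he => ih (hsep _) ((hq Cs (hWV hCs)).1 he),
      fun x' hx' => ih (hsep _) ((hq Cs (hWV hCs)).2 x' hx')⟩⟩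

theorem Identifiable.mq_succ {Y : Type*} {n : ℕ} {W : Set (Y → Bool)} (y : Y)
    (h : ∀ D ∈ W, Identifiable id (fun _ _ _ => (∅ : Set Y)) n {C ∈ W | C y = D y}) :
    Identifiable id (fun _ _ _ => (∅ : Set Y)) (n + 1) W :=
  Or.inr ⟨y, fun D hD => ⟨fun _ => by simpa using h D hD, fun _ hx' => hx'.elim⟩⟩

theorem Identifiable.mq_image {Y : Type*} {𝒦 : Set (X → Bool)}
    (Φ : (X → Bool) → Y → Bool) (g : Q → Y)
    (hsim : ∀ q, ∀ Cs ∈ 𝒦, ∃ x' ∈ CS q Cs, ∀ C ∈ 𝒦, Φ C (g q) = Φ Cs (g q) →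
      C (pt q) = Cs (pt q) ∧ x' ∈ CS q C ∧ C x' = Cs x')
    {n : ℕ} {V : Set (X → Bool)} (hV : V ⊆ 𝒦)
    (h : Identifiable pt (fun q C _ => CS q C) n V) :
    Identifiable id (fun _ _ _ => (∅ : Set Y)) n (Φ '' V) := by
  induction n generalizing V with
  | zero => exact Set.Subsingleton.image h Φ
  | succ n ih =>
    rcases h with h | ⟨q, hq⟩
    · exact Or.inl (h.image Φ)
    refine Identifiable.mq_succ (g q) ?_
    rintro _ ⟨Cs, hCs, rfl⟩
    obtain ⟨x', hx', hdet⟩ := hsim q Cs (hV hCs)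
    refine (ih (fun C hC => hV hC.1) ((hq Cs hCs).2 x' hx')).anti ?_
    rintro _ ⟨⟨C, hC, rfl⟩, hval⟩
    exact ⟨C, ⟨hC, hdet C (hV hC) hval⟩, rfl⟩

end Game

section Hamming

variable {ι : Type*} [Fintype ι]

theorem hammingDist_update_le_one [DecidableEq ι] (x : ι → Bool) (i : ι) (b : Bool) :
    hammingDist x (update x i b) ≤ 1 := by
  have hdiff : ∀ j, x j ≠ update x i b j → j = i := fun j hj =>
    by_contra fun hji => hj (update_of_ne hji b x).symm
  exact Finset.card_le_one.mpr fun j hj k hk =>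
    (hdiff j (by simpa using hj)).trans (hdiff k (by simpa using hk)).symm

theorem eq_update_of_hammingDist_le_one [DecidableEq ι] {x y : ι → Bool}
    (h : hammingDist x y ≤ 1) {i : ι} (hi : x i ≠ y i) : y = update x i (y i) := by
  funext j
  by_cases hji : j = i
  · subst hji; simp
  rw [update_of_ne hji]
  by_contra hj
  have hmem : ∀ k, x k ≠ y k → k ∈ ({k | x k ≠ y k} : Finset ι) := by simp
  exact hji (Finset.card_le_one.mp h j (hmem j (Ne.symm hj)) i (hmem i hi))

theorem mem_CSmin_hammingDist_iff {x x' : ι → Bool} {C : (ι → Bool) → Bool} :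
    x' ∈ CSmin dH x C ↔
      C x' ≠ C x ∧ ∀ x'', C x'' ≠ C x → hammingDist x x' ≤ hammingDist x x'' := by
  simp only [CSmin, Set.mem_ofPred_eq, Nat.cast_le]

theorem mem_CSmin_hammingDist_of_le_one {x x' : ι → Bool} {C : (ι → Bool) → Bool}
    (hd : hammingDist x x' ≤ 1) (hne : C x' ≠ C x) : x' ∈ CSmin dH x C := by
  refine mem_CSmin_hammingDist_iff.mpr ⟨hne, fun x'' h'' => hd.trans ?_⟩
  exact hammingDist_pos.mpr fun hx => h'' (hx ▸ rfl)

theorem exists_contrast_of_hammingDist_le_one {𝒦 : Set ((ι → Bool) → Bool)}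
    {P : ((ι → Bool) → Bool) → Prop} {x x' : ι → Bool} {Cs : (ι → Bool) → Bool}
    (hd : hammingDist x x' ≤ 1) (hne : Cs x' ≠ Cs x)
    (hdet : ∀ C ∈ 𝒦, P C → C x = Cs x ∧ C x' = Cs x') :
    ∃ x'' ∈ CSmin dH x Cs, ∀ C ∈ 𝒦, P C →
      C x = Cs x ∧ x'' ∈ CSmin dH x C ∧ C x'' = Cs x'' := by
  refine ⟨x', mem_CSmin_hammingDist_of_le_one hd hne, fun C hC hP => ?_⟩
  obtain ⟨hx, hx'⟩ := hdet C hC hP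
  exact ⟨hx, mem_CSmin_hammingDist_of_le_one hd (by rwa [hx, hx']), hx'⟩

end Hamming

section Cube

variable {m : ℕ}

def lastIdx (hm : 2 ≤ m) : Fin m := ⟨m - 1, Nat.sub_lt (by omega) Nat.one_pos⟩

def penIdx (hm : 2 ≤ m) : Fin m := ⟨m - 2, Nat.sub_lt (by omega) Nat.two_pos⟩

theorem penIdx_ne_lastIdx (hm : 2 ≤ m) : penIdx hm ≠ lastIdx hm :=
  Fin.ne_of_val_ne (by simp only [penIdx, lastIdx]; omega)

def freeEmbed (ym1 ym : Bool) (a : Fin (m - 2) → Bool) : Fin m → Bool :=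
  fun i => if h : (i : ℕ) < m - 2 then a ⟨i, h⟩ else if (i : ℕ) = m - 2 then !ym1 else !ym

def truncate (x : Fin m → Bool) : Fin (m - 2) → Bool :=
  fun i => x (Fin.castLE (Nat.sub_le m 2) i)

theorem freeEmbed_truncate (hm : 2 ≤ m) (ym1 ym : Bool) (x : Fin m → Bool) :
    freeEmbed ym1 ym (truncate x) = update (update x (penIdx hm) (!ym1)) (lastIdx hm) (!ym) := by
  funext i
  by_cases hlt : (i : ℕ) < m - 2
  · have hp : i ≠ penIdx hm := Fin.ne_of_val_ne (by simp only [penIdx]; omega)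
    have hl : i ≠ lastIdx hm := Fin.ne_of_val_ne (by simp only [lastIdx]; omega)
    simp [freeEmbed, truncate, hlt, update_of_ne hp, update_of_ne hl]
  by_cases hpen : (i : ℕ) = m - 2
  · obtain rfl : i = penIdx hm := Fin.ext hpen
    simp [freeEmbed, hpen, update_of_ne (penIdx_ne_lastIdx hm)]
  · obtain rfl : i = lastIdx hm := Fin.ext (by simp only [lastIdx]; omega)
    simp [freeEmbed, hlt, hpen]

variable (hm : 2 ≤ m) {ym1 ym : Bool} {𝒦 : Set ((Fin m → Bool) → Bool)}

theorem update_update_mem_CSmin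
    (hP1 : ∀ a : Fin m → Bool, a (lastIdx hm) = ym → ∀ C ∈ 𝒦, C a = true)
    (hP2 : ∀ a : Fin m → Bool, a (lastIdx hm) = !ym → a (penIdx hm) = ym1 →
      ∀ C ∈ 𝒦, C a = false)
    {x : Fin m → Bool} (h1 : x (lastIdx hm) = ym) {C : (Fin m → Bool) → Bool}
    (hC : C ∈ 𝒦)
    (hz : C (update x (lastIdx hm) (!ym)) = true) :
    update (update x (lastIdx hm) (!ym)) (penIdx hm) ym1 ∈ CSmin dH x C := by
  have hCx : C x = true := hP1 x h1 C hC
  have hCw : C (update (update x (lastIdx hm) (!ym)) (penIdx hm) ym1) = false :=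
    hP2 _ (by simp [update_of_ne (penIdx_ne_lastIdx hm).symm]) (by simp) C hC
  refine mem_CSmin_hammingDist_iff.mpr ⟨by simp [hCw, hCx], fun x'' hx'' => ?_⟩
  replace hx'' : C x'' = false := by simpa [hCx] using hx''
  calc hammingDist x (update (update x (lastIdx hm) (!ym)) (penIdx hm) ym1)
      ≤ 1 + 1 := (hammingDist_triangle _ _ _).trans
        (add_le_add (hammingDist_update_le_one _ _ _) (hammingDist_update_le_one _ _ _))
    _ ≤ hammingDist x x'' := by
      -- an opposite label at distance one could only sit at `update x (lastIdx hm) (!ym)`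
      by_contra! hlt
      have hl : x'' (lastIdx hm) ≠ ym := fun h => by simp [hP1 x'' h C hC] at hx''
      have hx''_eq := eq_update_of_hammingDist_le_one (by omega)
        (by rwa [h1, ne_comm] : x (lastIdx hm) ≠ x'' (lastIdx hm))
      rw [Bool.eq_not.mpr hl] at hx''_eq
      simp [← hx''_eq, hx''] at hz

theorem exists_contrast_determined_by_freeEmbed
    (hP1 : ∀ a : Fin m → Bool, a (lastIdx hm) = ym → ∀ C ∈ 𝒦, C a = true)
    (hP2 : ∀ a : Fin m → Bool, a (lastIdx hm) = !ym → a (penIdx hm) = ym1 →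
      ∀ C ∈ 𝒦, C a = false)
    (x : Fin m → Bool) {Cs : (Fin m → Bool) → Bool} (hCs : Cs ∈ 𝒦) :
    ∃ x' ∈ CSmin dH x Cs, ∀ C ∈ 𝒦,
      C (freeEmbed ym1 ym (truncate x)) = Cs (freeEmbed ym1 ym (truncate x)) →
        C x = Cs x ∧ x' ∈ CSmin dH x C ∧ C x' = Cs x' := by
  rw [freeEmbed_truncate hm]
  have hpl := penIdx_ne_lastIdx hm
  have hd := hammingDist_update_le_one x
  rcases Bool.eq_or_eq_not (x (lastIdx hm)) ym with h1 | h1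
  · have hCx : ∀ C ∈ 𝒦, C x = true := hP1 x h1
    rcases Bool.eq_or_eq_not (x (penIdx hm)) ym1 with h2 | h2
    · have hCx' : ∀ C ∈ 𝒦, C (update x (lastIdx hm) (!ym)) = false :=
        hP2 _ (by simp) (by simp [update_of_ne hpl, h2])
      exact exists_contrast_of_hammingDist_le_one (hd _ _) (by simp [hCx Cs hCs, hCx' Cs hCs])
        fun C hC _ => ⟨(hCx C hC).trans (hCx Cs hCs).symm, (hCx' C hC).trans (hCx' Cs hCs).symm⟩
    rw [← h2, update_eq_self]
    by_cases hz : Cs (update x (lastIdx hm) (!ym)) = true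
    · have hCw : ∀ C ∈ 𝒦,
          C (update (update x (lastIdx hm) (!ym)) (penIdx hm) ym1) = false :=
        hP2 _ (by simp [update_of_ne hpl.symm]) (by simp)
      exact ⟨_, update_update_mem_CSmin hm hP1 hP2 h1 hCs hz, fun C hC hCz =>
        ⟨(hCx C hC).trans (hCx Cs hCs).symm,
          update_update_mem_CSmin hm hP1 hP2 h1 hC (hCz.trans hz),
          (hCw C hC).trans (hCw Cs hCs).symm⟩⟩
    exact exists_contrast_of_hammingDist_le_one (hd _ _) (by simp [hz, hCx Cs hCs])
      fun C hC hCz => ⟨(hCx C hC).trans (hCx Cs hCs).symm, hCz⟩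
  · have hCl : ∀ C ∈ 𝒦, C (update x (lastIdx hm) ym) = true := hP1 _ (by simp)
    rcases Bool.eq_or_eq_not (x (penIdx hm)) ym1 with h2 | h2
    · have hCx : ∀ C ∈ 𝒦, C x = false := hP2 x h1 h2
      exact exists_contrast_of_hammingDist_le_one (hd _ _) (by simp [hCx Cs hCs, hCl Cs hCs])
        fun C hC _ => ⟨(hCx C hC).trans (hCx Cs hCs).symm, (hCl C hC).trans (hCl Cs hCs).symm⟩
    rw [← h2, ← h1, update_eq_self, update_eq_self]
    by_cases hx : Cs x = true
    · have hCp : ∀ C ∈ 𝒦, C (update x (penIdx hm) ym1) = false :=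
        hP2 _ (by simp [update_of_ne hpl.symm, h1]) (by simp)
      exact exists_contrast_of_hammingDist_le_one (hd _ _) (by simp [hx, hCp Cs hCs])
        fun C hC hCx => ⟨hCx, (hCp C hC).trans (hCp Cs hCs).symm⟩
    exact exists_contrast_of_hammingDist_le_one (hd _ _) (by simp [hx, hCl Cs hCs])
      fun C hC hCx => ⟨hCx, (hCl C hC).trans (hCl Cs hCs).symm⟩

end Cube

/-- Let `𝓒' ⊆ 𝓒` be concept classes over `{0,1}^m` (`m ≥ 2`),
`y_{m−1}, y_m ∈ {0,1}`, and suppose (P1) every `C ∈ 𝓒'` is 1 on all points whose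
`m`-th coordinate is `y_m`, and (P2) every `C ∈ 𝓒'` is 0 on all points whose `m`-th
coordinate is `¬y_m` and whose `(m−1)`-st coordinate is `y_{m−1}`.  Let `𝓒''` be the
class over `{0,1}^{m−2}` of the restrictions of concepts of `𝓒'` obtained by fixing
the last two coordinates to `¬y_{m−1}` and `¬y_m`.  Then, with `d` the Hamming
distance, `S^d_min(𝓒) ≥ S^d_min(𝓒') ≥ S[MQ](𝓒'')`. -/
theorem statement14 (m : ℕ) (hm : 2 ≤ m)
    (𝓒 𝓒' : Set ((Fin m → Bool) → Bool)) (hsub : 𝓒' ⊆ 𝓒)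
    (ym1 ym : Bool)
    (hP1 : ∀ a : Fin m → Bool, a ⟨m - 1, by omega⟩ = ym → ∀ C ∈ 𝓒', C a = true)
    (hP2 : ∀ a : Fin m → Bool,
      a ⟨m - 1, by omega⟩ = !ym → a ⟨m - 2, by omega⟩ = ym1 → ∀ C ∈ 𝓒', C a = false) :
    SMQ {C'' : (Fin (m - 2) → Bool) → Bool | ∃ C ∈ 𝓒',
        C'' = fun a => C (fun i => if h : (i : ℕ) < m - 2 then a ⟨(i : ℕ), h⟩
          else if (i : ℕ) = m - 2 then !ym1 else !ym)} ≤
      Smin (fun a b => ((hammingDist a b : ℕ) : ℝ≥0)) 𝓒' ∧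
    Smin (fun a b => ((hammingDist a b : ℕ) : ℝ≥0)) 𝓒' ≤ Smin (fun a b => ((hammingDist a b : ℕ) : ℝ≥0)) 𝓒 := by
  refine ⟨sampleComplexity_le_of_identifiable fun _ hn => ?_,
    sampleComplexity_le_of_identifiable fun _ hn => hn.anti hsub⟩
  refine (hn.mq_image (fun C a => C (freeEmbed ym1 ym a)) truncate
    (fun x _ hCs => exists_contrast_determined_by_freeEmbed hm hP1 hP2 x hCs) subset_rfl).anti ?_
  rintro _ ⟨C, hC, rfl⟩
  exact ⟨C, hC, rfl⟩
end

section
/- Let m ≥ 3, s ≥ 2, z ≥ 2. Then S^d_min(MDNF_{m,s,z}) ≥ S[MQ](MDNF_{m−2,s−1,z−1}), where d is the Hamming distance on {0,1}^m. -/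
open scoped NNReal

/-- `MDNF_{m,s,z}`: Boolean functions over `{0,1}^m` expressible as a disjunction of
`s` monotone monomials (not necessarily distinct), each with at most `z` variables. -/
def MDNF (m s z : ℕ) : Set ((Fin m → Bool) → Bool) :=
  {f | ∃ M : Fin s → Finset (Fin m), (∀ i, (M i).card ≤ z) ∧
    f = fun b => decide (∃ i, ∀ j ∈ M i, b j = true)}

namespace S17
variable {n : ℕ}

def ca (n : ℕ) : Fin (n+2) := ⟨n, by omega⟩
def cb (n : ℕ) : Fin (n+2) := ⟨n+1, by omega⟩
def ce {n : ℕ} (j : Fin n) : Fin (n+2) := ⟨j.1, by omega⟩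
lemma ce_ne_ca (j : Fin n) : ce j ≠ ca n := by
  simp only [ce, ca, Ne, Fin.mk.injEq]; omega
lemma ce_ne_cb (j : Fin n) : ce j ≠ cb n := by
  simp only [ce, cb, Ne, Fin.mk.injEq]; omega
lemma ca_ne_cb : ca n ≠ cb n := by
  simp only [ca, cb, Ne, Fin.mk.injEq]; omega
lemma ce_inj : Function.Injective (ce (n := n)) := fun j k h => by
  rwa [ce, ce, Fin.mk.injEq, ← Fin.ext_iff] at h

def lift {n : ℕ} (b' : Fin n → Bool) : Fin (n+2) → Bool :=
  fun i => if h : i.1 < n then b' ⟨i.1, h⟩ else decide (i.1 = n)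
def φ (C : (Fin n → Bool) → Bool) : (Fin (n+2) → Bool) → Bool :=
  fun x => x (ca n) && (C (fun j => x (ce j)) || x (cb n))
lemma hd_update (x : Fin (n+2) → Bool) (i : Fin (n+2)) (c : Bool) (h : c ≠ x i) :
    hammingDist x (Function.update x i c) = 1 := by
  unfold hammingDist
  rw [show ({j | x j ≠ Function.update x i c j} : Finset _) = {i} from ?_, Finset.card_singleton]
  ext j
  by_cases hj : j = i <;> simp [hj, Function.update_apply, Ne, h.symm]

def dH : (Fin (n+2) → Bool) → (Fin (n+2) → Bool) → ℝ≥0 :=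
  fun a b => ((hammingDist a b : ℕ) : ℝ≥0)

def resp (q : Fin (n+2) → Bool) (y : Bool) : Fin (n+2) → Bool :=
  if q (ca n) then
    (if y || q (cb n) then Function.update q (ca n) false
     else Function.update q (cb n) true)
  else
    (if y || q (cb n) then Function.update q (ca n) true
     else Function.update (Function.update q (ca n) true) (cb n) true)

lemma hra (q : Fin (n+2) → Bool) (c : Bool) :
    (fun j => Function.update q (ca n) c (ce j)) = fun j => q (ce j) :=
  funext fun j => by simp [Function.update_apply, ce_ne_ca j]
lemma hrb (q : Fin (n+2) → Bool) (c : Bool) :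
    (fun j => Function.update q (cb n) c (ce j)) = fun j => q (ce j) :=
  funext fun j => by simp [Function.update_apply, ce_ne_cb j]
lemma hrab (q : Fin (n+2) → Bool) (c c' : Bool) :
    (fun j => Function.update (Function.update q (ca n) c) (cb n) c' (ce j)) = fun j => q (ce j) :=
  funext fun j => by simp [Function.update_apply, ce_ne_ca j, ce_ne_cb j]

lemma resp_spec (C : (Fin n → Bool) → Bool) (q : Fin (n+2) → Bool) (y : Bool)
    (hy : C (fun j => q (ce j)) = y) :
    resp q y ∈ CSmin dH q (φ C) ∧
    φ C (resp q y) = !(q (ca n) && (y || q (cb n))) := by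
  have hφq : φ C q = (q (ca n) && (y || q (cb n))) := by simp [φ, hy]
  -- distance lower bound from mere inequality of labels
  have hge1 : ∀ x'' : Fin (n+2) → Bool, φ C x'' ≠ φ C q → 1 ≤ hammingDist q x'' := by
    intro x'' hne
    have : x'' ≠ q := fun h => hne (by rw [h])
    have := hammingDist_pos.mpr (Ne.symm this)
    omega
  have hcast : ∀ {a b : ℕ}, a ≤ b → ((a : ℝ≥0) ≤ (b : ℝ≥0)) := fun h => by exact_mod_cast h
  by_cases hu : q (ca n) = true
  · by_cases hv : (y || q (cb n)) = true
    · -- resp = update ca ↦ false, label false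
      have hr : resp q y = Function.update q (ca n) false := by simp [resp, hu, hv]
      have hval : φ C (resp q y) = false := by
        rw [hr]; simp [φ, Function.update_self]
      refine ⟨⟨?_, ?_⟩, ?_⟩
      · rw [hval, hφq, hu, hv]; simp
      · intro x'' hx''
        have h1 : hammingDist q (resp q y) = 1 := by
          rw [hr]; exact hd_update q _ _ (by simp [hu])
        have hle := hge1 x'' hx''
        simp only [dH, Nat.cast_le]
        omega
      · rw [hval, hu, hv]; rfl
    · -- y = false, q cb = false; resp = update cb ↦ true, label true
      have hy0 : y = false := by revert hv; cases y <;> simp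
      have hb0 : q (cb n) = false := by revert hv; cases h : q (cb n) <;> simp [h]
      have hr : resp q y = Function.update q (cb n) true := by simp [resp, hu, hv]
      have hval : φ C (resp q y) = true := by
        rw [hr]; simp [φ, Function.update_self, Function.update_of_ne ca_ne_cb, hu]
      refine ⟨⟨?_, ?_⟩, ?_⟩
      · rw [hval, hφq, hu, hy0, hb0]; simp
      · intro x'' hx''
        have h1 : hammingDist q (resp q y) = 1 := by
          rw [hr]; exact hd_update q _ _ (by simp [hb0])
        have hle := hge1 x'' hx''
        simp only [dH, Nat.cast_le]
        omega
      · rw [hval, hu, hy0, hb0]; rfl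
  · have hu0 : q (ca n) = false := by revert hu; cases h : q (ca n) <;> simp [h]
    by_cases hv : (y || q (cb n)) = true
    · -- resp = update ca ↦ true, label true
      have hr : resp q y = Function.update q (ca n) true := by simp [resp, hu0, hv]
      have hval : φ C (resp q y) = true := by
        rw [hr]; simp [φ, Function.update_self, Function.update_of_ne (Ne.symm ca_ne_cb) , hra, hy, hv]
      refine ⟨⟨?_, ?_⟩, ?_⟩
      · rw [hval, hφq, hu0]; simp
      · intro x'' hx''
        have h1 : hammingDist q (resp q y) = 1 := by
          rw [hr]; exact hd_update q _ _ (by simp [hu0])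
        have hle := hge1 x'' hx''
        simp only [dH, Nat.cast_le]
        omega
      · rw [hval, hu0]; rfl
    · -- y = false, q cb = false; resp = double update, label true, min dist 2
      have hy0 : y = false := by revert hv; cases y <;> simp
      have hb0 : q (cb n) = false := by revert hv; cases h : q (cb n) <;> simp [h]
      have hr : resp q y = Function.update (Function.update q (ca n) true) (cb n) true := by
        simp [resp, hu0, hv]
      have hval : φ C (resp q y) = true := by
        rw [hr]
        simp [φ, Function.update_self, Function.update_of_ne ca_ne_cb,
          Function.update_of_ne (Ne.symm ca_ne_cb)]
      have hφq0 : φ C q = false := by rw [hφq, hu0]; simp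
      have h2 : hammingDist q (resp q y) = 2 := by
        rw [hr]
        unfold hammingDist
        rw [show ({j | q j ≠ Function.update (Function.update q (ca n) true) (cb n) true j} : Finset _)
            = {ca n, cb n} from ?_]
        · exact Finset.card_pair ca_ne_cb
        · ext j
          rcases eq_or_ne j (ca n) with hj | hj
          · simp [hj, Function.update_of_ne ca_ne_cb, Function.update_self, hu0]
          · rcases eq_or_ne j (cb n) with hj' | hj'
            · simp [hj', Function.update_self, hb0, ca_ne_cb]
            · simp [Function.update_of_ne hj, Function.update_of_ne hj', hj, hj']
      have hge2 : ∀ x'' : Fin (n+2) → Bool, φ C x'' ≠ φ C q → 2 ≤ hammingDist q x'' := by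
        intro x'' hne
        have hx''t : φ C x'' = true := by
          revert hne; rw [hφq0]; cases h : φ C x'' <;> simp [h]
        have hx''a : x'' (ca n) = true := by
          have := hx''t
          unfold φ at this
          exact (Bool.and_eq_true _ _).mp this |>.1
        by_contra hlt
        push_neg at hlt
        -- hammingDist q x'' ≤ 1, and ca is a difference ⇒ x'' = update q (ca n) true
        have hmem : ca n ∈ ({j | q j ≠ x'' j} : Finset _) := by
          simp [hu0, hx''a]
        have hcard : ({j | q j ≠ x'' j} : Finset _).card ≤ 1 := by
          unfold hammingDist at hlt; omega
        have heq : x'' = Function.update q (ca n) true := by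
          funext i
          rcases eq_or_ne i (ca n) with hi | hi
          · rw [hi, Function.update_self, hx''a]
          · rw [Function.update_of_ne hi]
            by_contra hne'
            have hmem' : i ∈ ({j | q j ≠ x'' j} : Finset _) := by
              simp only [Finset.mem_filter, Finset.mem_univ, true_and]
              exact fun h => hne' h.symm
            have hsub2 : ({ca n, i} : Finset (Fin (n+2))) ⊆ ({j | q j ≠ x'' j} : Finset _) := by
              intro j hj
              rcases Finset.mem_insert.mp hj with rfl | hj
              · exact hmem
              · rw [Finset.mem_singleton] at hj; subst hj; exact hmem'
            have hc2 := Finset.card_le_card hsub2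
            rw [Finset.card_pair (Ne.symm hi)] at hc2
            omega
        rw [heq] at hx''t
        simp [φ, Function.update_self, Function.update_of_ne (Ne.symm ca_ne_cb), hra, hy, hy0, hb0] at hx''t
      refine ⟨⟨?_, ?_⟩, ?_⟩
      · rw [hval, hφq0]; simp
      · intro x'' hx''
        have hle := hge2 x'' hx''
        simp only [dH, Nat.cast_le]
        omega
      · rw [hval, hu0]; rfl


lemma lift_spec (b' : Fin n → Bool) :
    lift b' (ca n) = true ∧ lift b' (cb n) = false ∧ (fun j => lift b' (ce j)) = b' := by
  refine ⟨by simp [lift, ca], by simp [lift, cb], funext fun j => ?_⟩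
  simp [lift, ce, j.2]

lemma phi_inj : Function.Injective (φ (n := n)) := by
  intro C C' h
  funext b'
  obtain ⟨h1, h2, h3⟩ := lift_spec b'
  have h0 := congrFun h (lift b')
  simpa [φ, h1, h2, h3] using h0

lemma reduction (k : ℕ) :
    ∀ (VB : Set ((Fin (n+2) → Bool) → Bool)) (VA : Set ((Fin n → Bool) → Bool)),
    (∀ C ∈ VA, φ C ∈ VB) →
    Identifiable id (fun x C _ => CSmin (dH (n := n)) x C) k VB →
    Identifiable id (fun _ _ _ => (∅ : Set (Fin n → Bool))) k VA := by
  induction k with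
  | zero =>
    intro VB VA hsub hB C hC C' hC'
    exact phi_inj (hB (hsub C hC) (hsub C' hC'))
  | succ k ih =>
    intro VB VA hsub hB
    rw [Identifiable] at hB ⊢
    rcases hB with hB | ⟨q, hq⟩
    · exact Or.inl fun C hC C' hC' => phi_inj (hB (hsub C hC) (hsub C' hC'))
    · right
      refine ⟨fun j => q (ce j), fun CstarA hA => ⟨fun _ => ?_, fun x' hx' => absurd hx' (by simp)⟩⟩
      set y := CstarA (fun j => q (ce j)) with hydef
      obtain ⟨hmem, hlab⟩ := resp_spec CstarA q y hydef.symm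
      have hB' := (hq (φ CstarA) (hsub _ hA)).2 (resp q y) hmem
      refine ih _ _ ?_ hB'
      rintro C ⟨hCV, hCeq, -⟩
      have hCeq' : C (fun j => q (ce j)) = y := hCeq
      obtain ⟨hmemC, hlabC⟩ := resp_spec C q y hCeq'
      refine ⟨hsub C hCV, ?_, hmemC, ?_⟩
      · show φ C (id q) = φ CstarA (id q)
        simp only [id_eq, φ, hCeq', hydef]
      · rw [hlabC, hlab]

lemma phi_mdnf {t w : ℕ} (hw : 1 ≤ w) {C : (Fin n → Bool) → Bool}
    (hC : C ∈ MDNF n t w) : φ C ∈ MDNF (n+2) (t+1) (w+1) := by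
  obtain ⟨M, hcard, rfl⟩ := hC
  refine ⟨fun i => if h : (i : ℕ) < t then insert (ca n) ((M ⟨i, h⟩).map ⟨ce, ce_inj⟩)
    else {ca n, cb n}, fun i => ?_, ?_⟩
  · by_cases h : (i : ℕ) < t
    · simp only [h, dif_pos]
      calc (insert (ca n) ((M ⟨i, h⟩).map ⟨ce, ce_inj⟩)).card
          ≤ ((M ⟨i, h⟩).map ⟨ce, ce_inj⟩).card + 1 := Finset.card_insert_le _ _
        _ ≤ w + 1 := by rw [Finset.card_map]; exact Nat.add_le_add_right (hcard _) 1
    · simp only [h, dif_neg, not_false_iff]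
      rw [Finset.card_pair ca_ne_cb]; omega
  · funext x
    show φ _ x = _
    have key : (∃ i : Fin (t+1), ∀ j ∈ (if h : (i : ℕ) < t then
          insert (ca n) ((M ⟨i, h⟩).map ⟨ce, ce_inj⟩) else {ca n, cb n}), x j = true)
        ↔ (x (ca n) = true ∧ ((∃ i : Fin t, ∀ j ∈ M i, x (ce j) = true) ∨ x (cb n) = true)) := by
      constructor
      · rintro ⟨i, hi⟩
        by_cases h : (i : ℕ) < t
        · rw [dif_pos h] at hi
          refine ⟨hi _ (Finset.mem_insert_self _ _), Or.inl ⟨⟨i, h⟩, fun j hj => ?_⟩⟩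
          exact hi _ (Finset.mem_insert_of_mem (Finset.mem_map_of_mem _ hj))
        · rw [dif_neg h] at hi
          exact ⟨hi _ (Finset.mem_insert_self _ _),
            Or.inr (hi _ (Finset.mem_insert_of_mem (Finset.mem_singleton_self _)))⟩
      · rintro ⟨ha, hrest | hb⟩
        · obtain ⟨i, hi⟩ := hrest
          refine ⟨⟨i.1, by omega⟩, ?_⟩
          rw [dif_pos i.2]
          intro j hj
          rcases Finset.mem_insert.mp hj with rfl | hj
          · exact ha
          · obtain ⟨j', hj', rfl⟩ := Finset.mem_map.mp hj
            exact hi j' (by simpa using hj')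
        · refine ⟨⟨t, by omega⟩, ?_⟩
          rw [dif_neg (by simp)]
          intro j hj
          rcases Finset.mem_insert.mp hj with rfl | hj
          · exact ha
          · rw [Finset.mem_singleton] at hj; subst hj; exact hb
    rw [φ, Bool.eq_iff_iff]
    simp only [Bool.and_eq_true, Bool.or_eq_true, decide_eq_true_eq]
    rw [key]

end S17

/-- For `m ≥ 3`, `s ≥ 2`, `z ≥ 2`,
`S^d_min(MDNF_{m,s,z}) ≥ S[MQ](MDNF_{m−2,s−1,z−1})`, with `d` the Hamming distance
on `{0,1}^m`. -/
theorem statement17 (m s z : ℕ) (hm : 3 ≤ m) (hs : 2 ≤ s) (hz : 2 ≤ z) :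
    SMQ (MDNF (m - 2) (s - 1) (z - 1)) ≤ Smin (fun a b => ((hammingDist a b : ℕ) : ℝ≥0)) (MDNF m s z) := by
  obtain ⟨n, rfl⟩ : ∃ n, m = n + 2 := ⟨m - 2, by omega⟩
  obtain ⟨t, rfl⟩ : ∃ t, s = t + 1 := ⟨s - 1, by omega⟩
  obtain ⟨w, rfl⟩ : ∃ w, z = w + 1 := ⟨z - 1, by omega⟩
  have hw : 1 ≤ w := by omega
  simp only [Nat.add_sub_cancel]
  apply sInf_le_sInf
  rintro ν ⟨k, rfl, hk⟩
  exact ⟨k, rfl, S17.reduction k _ _ (fun C hC => S17.phi_mdnf hw hC) hk⟩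
end
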